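/- arXiv:1006.4343 — 4 statements merged into one kernel-verified Lean document; each statement's English description precedes it below -/
import Mathlib

section
/- In an additive category in which every morphism has a kernel and a cokernel, the following are equivalent: (1) for every morphism f the canonical morphism Coim f → Im f is an epimorphism (where Coim f = Coker(ker f) and Im f = Ker(coker f)); (2) the composition of any two morphisms that are kernels is again a kernel of some morphism; (3) any right divisor of a kernel is a kernel. -/
open CategoryTheory CategoryTheory.Limits

universe v u

variable {C : Type u} [Category.{v} C] [Preadditive C]

/-- A morphism `k : X ⟶ Y` is "a kernel" if it arises as the kernel of some morphism,
expressed via the universal property. -/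
def IsKernelMor {X Y : C} (k : X ⟶ Y) : Prop :=
  ∃ (Z : C) (g : Y ⟶ Z), k ≫ g = 0 ∧
    ∀ ⦃T : C⦄ (h : T ⟶ Y), h ≫ g = 0 → ∃! u : T ⟶ X, u ≫ k = h

lemma IsKernelMor.mono {X Y : C} {k : X ⟶ Y} (hk : IsKernelMor k) : Mono k := by
  obtain ⟨Z, g, hg, H⟩ := hk
  refine ⟨fun {T} a b hab => ?_⟩
  obtain ⟨u, -, hu⟩ := H (a ≫ k) (by rw [Category.assoc, hg, Limits.comp_zero])
  rw [hu a rfl, hu b hab.symm]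

lemma isKernelMor_kernel_ι [HasKernels C] {Y Z : C} (g : Y ⟶ Z) :
    IsKernelMor (kernel.ι g) := by
  refine ⟨Z, g, kernel.condition g, fun T h hh => ?_⟩
  exact ⟨kernel.lift g h hh, kernel.lift_ι g h hh,
    fun u hu => by rw [← cancel_mono (kernel.ι g), hu, kernel.lift_ι]⟩

lemma IsKernelMor.comp_of_isIso {X I Y : C} {e : X ⟶ I} {m : I ⟶ Y}
    (hm : IsKernelMor m) (he : IsIso e) : IsKernelMor (e ≫ m) := by
  obtain ⟨Z, g, hg, H⟩ := hm
  refine ⟨Z, g, by rw [Category.assoc, hg, Limits.comp_zero], fun T h hh => ?_⟩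
  obtain ⟨u, hu, huniq⟩ := H h hh
  refine ⟨u ≫ inv e, ?_, fun v hv => ?_⟩
  · show (u ≫ inv e) ≫ e ≫ m = h
    simp only [Category.assoc, IsIso.inv_hom_id_assoc, hu]
  · have hv' : v ≫ e ≫ m = h := hv
    have : v ≫ e = u := huniq (v ≫ e) (show (v ≫ e) ≫ m = h by rw [Category.assoc]; exact hv')
    rw [← this, Category.assoc, IsIso.hom_inv_id, Category.comp_id]

/-- The canonical factorization of `f` through its abelian image, packaged opaquely. -/
lemma exists_image_factorization [HasKernels C] [HasCokernels C] {X Y : C} (f : X ⟶ Y) :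
    ∃ (I : C) (e : X ⟶ I) (m : I ⟶ Y), e ≫ m = f ∧ IsKernelMor m ∧ Mono m ∧
      m ≫ cokernel.π f = 0 ∧ (Epi (Abelian.coimageImageComparison f) ↔ Epi e) := by
  refine ⟨Abelian.image f, Abelian.factorThruImage f, Abelian.image.ι f,
    Abelian.image.fac f, isKernelMor_kernel_ι _, inferInstance, kernel.condition _, ?_⟩
  have key : Abelian.coimage.π f ≫ Abelian.coimageImageComparison f
      = Abelian.factorThruImage f := by
    simp [Abelian.coimageImageComparison]
  constructor
  · intro h
    rw [← key]
    exact epi_comp _ _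
  · intro h
    have : Epi (Abelian.coimage.π f ≫ Abelian.coimageImageComparison f) := by
      rw [key]; exact h
    exact epi_of_epi (Abelian.coimage.π f) _

/-- In an additive category with kernels and cokernels, the following are equivalent:
(1) for every morphism `f` the canonical morphism `Coim f ⟶ Im f` is an epimorphism;
(2) the composition of any two kernels is a kernel;
(3) any right divisor of a kernel is a kernel. -/
theorem stmt_1 [HasBinaryBiproducts C] [HasKernels C] [HasCokernels C] :
    List.TFAE [
      ∀ (X Y : C) (f : X ⟶ Y), Epi (Abelian.coimageImageComparison f),
      ∀ (X Y Z : C) (k₁ : X ⟶ Y) (k₂ : Y ⟶ Z),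
        IsKernelMor k₁ → IsKernelMor k₂ → IsKernelMor (k₁ ≫ k₂),
      ∀ (X Y Z : C) (g : X ⟶ Y) (f : Y ⟶ Z),
        IsKernelMor (g ≫ f) → IsKernelMor g] := by
  tfae_have 1 → 2 := by
    intro h1 X Y Z k₁ k₂ hk₁ hk₂
    have hm1 : Mono k₁ := hk₁.mono
    have hm2 : Mono k₂ := hk₂.mono
    obtain ⟨I, e, m, hem, hmker, hmono, -, hiff⟩ :=
      exists_image_factorization (k₁ ≫ k₂)
    have hepi : Epi e := hiff.mp (h1 _ _ _)
    have hmonoe : Mono e := by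
      have : Mono (k₁ ≫ k₂) := mono_comp _ _
      exact mono_of_mono_fac hem
    obtain ⟨B, b, hb0, hbU⟩ := hk₂
    have hmb : m ≫ b = 0 := by
      rw [← cancel_epi e, comp_zero, ← Category.assoc, hem, Category.assoc, hb0, comp_zero]
    obtain ⟨m', hm', -⟩ := hbU m hmb
    have hem' : e ≫ m' = k₁ := by
      rw [← cancel_mono k₂, Category.assoc, hm', hem]
    obtain ⟨A, a, ha0, haU⟩ := hk₁
    have hma : m' ≫ a = 0 := by
      rw [← cancel_epi e, comp_zero, ← Category.assoc, hem', ha0]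
    obtain ⟨u, hu, -⟩ := haU m' hma
    have hue : u ≫ e = 𝟙 _ := by
      rw [← cancel_mono m, Category.assoc, hem, Category.id_comp, ← Category.assoc, hu, hm']
    have heu : e ≫ u = 𝟙 _ := by
      rw [← cancel_mono e, Category.assoc, hue, Category.comp_id, Category.id_comp]
    have : IsIso e := ⟨u, heu, hue⟩
    have := hmker.comp_of_isIso this
    rwa [hem] at this
  tfae_have 1 → 3 := by
    intro h1 X Y Z g f hgf
    have hmgf : Mono (g ≫ f) := hgf.mono
    obtain ⟨I, e, m, hem, hmker, hmono, -, hiff⟩ := exists_image_factorization g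
    have hepi : Epi e := hiff.mp (h1 _ _ _)
    obtain ⟨W, t, ht0, htU⟩ := hgf
    have hmf : (m ≫ f) ≫ t = 0 := by
      rw [← cancel_epi e, comp_zero, ← Category.assoc, ← Category.assoc, hem,
        Category.assoc, ← Category.assoc, ht0]
    obtain ⟨u, hu, -⟩ := htU (m ≫ f) hmf
    have heu : e ≫ u = 𝟙 _ := by
      rw [← cancel_mono (g ≫ f), Category.assoc, hu, Category.id_comp, ← Category.assoc, hem]
    have hue : u ≫ e = 𝟙 _ := by
      rw [← cancel_epi e, ← Category.assoc, heu, Category.comp_id, Category.id_comp]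
    have : IsIso e := ⟨u, heu, hue⟩
    have := hmker.comp_of_isIso this
    rwa [hem] at this
  tfae_have 2 → 1 := by
    intro h2 X Y f
    obtain ⟨I, e, m, hem, hmker, hmono, hmcoker, hiff⟩ := exists_image_factorization f
    rw [hiff]
    apply Preadditive.epi_of_cancel_zero
    intro W t het
    obtain ⟨V, ψ, hψ0, hψU⟩ :=
      h2 _ _ _ (kernel.ι t) m (isKernelMor_kernel_ι t) hmker
    have he' : kernel.lift t e het ≫ kernel.ι t = e := kernel.lift_ι t e het
    have hfψ : f ≫ ψ = 0 := by
      rw [← hem, ← he', Category.assoc, Category.assoc, ← Category.assoc (kernel.ι t),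
        hψ0, comp_zero]
    have hmψ : m ≫ ψ = 0 := by
      rw [← cokernel.π_desc f ψ hfψ, ← Category.assoc, hmcoker, zero_comp]
    obtain ⟨s, hs, -⟩ := hψU m hmψ
    have hsk : s ≫ kernel.ι t = 𝟙 _ := by
      rw [← cancel_mono m, Category.assoc, Category.id_comp]
      exact hs
    calc t = (s ≫ kernel.ι t) ≫ t := by rw [hsk, Category.id_comp]
    _ = 0 := by rw [Category.assoc, kernel.condition, comp_zero]
  tfae_have 3 → 1 := by
    intro h3 X Y f
    obtain ⟨I, e, m, hem, hmker, hmono, hmcoker, hiff⟩ := exists_image_factorization f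
    rw [hiff]
    apply Preadditive.epi_of_cancel_zero
    intro W t het
    have hφk : IsKernelMor (biprod.lift t m) := by
      refine h3 _ _ _ (biprod.lift t m) biprod.snd ?_
      rw [biprod.lift_snd]
      exact hmker
    obtain ⟨V, ψ, hψ0, hψU⟩ := hφk
    have heφ : e ≫ biprod.lift t m = f ≫ biprod.inr := by
      apply biprod.hom_ext
      · simp [het]
      · simp [hem]
    have hfψ : f ≫ biprod.inr ≫ ψ = 0 := by
      rw [← Category.assoc, ← heφ, Category.assoc, hψ0, comp_zero]
    have hmψ : (m ≫ biprod.inr) ≫ ψ = 0 := by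
      have h2 : biprod.inr ≫ ψ = cokernel.π f ≫ cokernel.desc f (biprod.inr ≫ ψ) hfψ :=
        (cokernel.π_desc f _ hfψ).symm
      rw [Category.assoc, h2, ← Category.assoc, hmcoker, zero_comp]
    obtain ⟨s, hs, -⟩ := hψU (m ≫ biprod.inr) hmψ
    have hsid : s = 𝟙 _ := by
      rw [← cancel_mono m]
      have := congrArg (fun x => x ≫ (biprod.snd : W ⊞ Y ⟶ Y)) hs
      simpa using this
    have := congrArg (fun x => x ≫ (biprod.fst : W ⊞ Y ⟶ W)) hs
    simp [hsid] at this
    exact this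
  tfae_finish
end

section
/- Let E be an exact category (with axioms Ex0–Ex2 satisfied). In a commutative diagram where X' → X → X'' is an admissible short exact sequence, Y' → Y → X'' is an admissible short exact sequence, there is a morphism X' → Y' and a morphism X → Y making the squares commute, and X → X'' is the cokernel of X' → X, then Y is the pushout (fibered coproduct) of X' → Y' and X' → X. -/
open CategoryTheory CategoryTheory.Limits ZeroObject

universe v u

/-- The data of a class of "admissible triples" on a category: a predicate on composable
pairs of morphisms `X ⟶ Y ⟶ Z`. -/
structure ExData (C : Type u) [Category.{v} C] where
  adm : ∀ ⦃X Y Z : C⦄, (X ⟶ Y) → (Y ⟶ Z) → Prop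

namespace ExData

variable {C : Type u} [Category.{v} C] [Preadditive C]

/-- A morphism is an admissible monomorphism if it is the first map of an admissible triple. -/
def AdmMono (E : ExData C) {X Y : C} (f : X ⟶ Y) : Prop := ∃ (Z : C) (g : Y ⟶ Z), E.adm f g

/-- A morphism is an admissible epimorphism if it is the second map of an admissible triple. -/
def AdmEpi (E : ExData C) {Y Z : C} (g : Y ⟶ Z) : Prop := ∃ (X : C) (f : X ⟶ Y), E.adm f g

/-- Axiom Ex0: the zero triple is admissible and the class of admissible triples is closed
under isomorphism of triples. -/
def Ex0 [HasZeroObject C] (E : ExData C) : Prop :=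
  E.adm (𝟙 (0 : C)) (𝟙 (0 : C)) ∧
  ∀ ⦃X Y Z X' Y' Z' : C⦄ (f : X ⟶ Y) (g : Y ⟶ Z) (f' : X' ⟶ Y') (g' : Y' ⟶ Z')
    (a : X ≅ X') (b : Y ≅ Y') (c : Z ≅ Z'),
    E.adm f g → f ≫ b.hom = a.hom ≫ f' → g ≫ c.hom = b.hom ≫ g' → E.adm f' g'

/-- Axiom Ex1: in an admissible triple `X ⟶ Y ⟶ Z` the two morphisms are each other's
kernel and cokernel. -/
def Ex1 (E : ExData C) : Prop :=
  ∀ ⦃X Y Z : C⦄ (f : X ⟶ Y) (g : Y ⟶ Z), E.adm f g →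
    f ≫ g = 0 ∧
    (∀ ⦃T : C⦄ (h : T ⟶ Y), h ≫ g = 0 → ∃! k : T ⟶ X, k ≫ f = h) ∧
    (∀ ⦃T : C⦄ (h : Y ⟶ T), f ≫ h = 0 → ∃! k : Z ⟶ T, g ≫ k = h)

/-- Axiom Ex2(a): pushout of an admissible triple along a morphism out of its first term. -/
def Ex2a (E : ExData C) : Prop :=
  ∀ ⦃X' X X'' Y' : C⦄ (f : X' ⟶ X) (g : X ⟶ X''), E.adm f g → ∀ (t : X' ⟶ Y'),
    ∃ (Y : C) (i : Y' ⟶ Y) (u : X ⟶ Y) (g' : Y ⟶ X''),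
      E.adm i g' ∧ t ≫ i = f ≫ u ∧ u ≫ g' = g

/-- Axiom Ex2(b): pullback of an admissible triple along a morphism into its last term. -/
def Ex2b (E : ExData C) : Prop :=
  ∀ ⦃X' X X'' Y'' : C⦄ (f : X' ⟶ X) (g : X ⟶ X''), E.adm f g → ∀ (t : Y'' ⟶ X''),
    ∃ (Y : C) (f' : X' ⟶ Y) (u : Y ⟶ X) (g' : Y ⟶ Y''),
      E.adm f' g' ∧ f' ≫ u = f ∧ u ≫ g = g' ≫ t

/-- Axiom Ex3(a): the composition of two admissible monomorphisms is an admissible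
monomorphism. -/
def Ex3a (E : ExData C) : Prop :=
  ∀ ⦃X Y Z : C⦄ (f : X ⟶ Y) (g : Y ⟶ Z), E.AdmMono f → E.AdmMono g → E.AdmMono (f ≫ g)

/-- Axiom Ex3(b): the composition of two admissible epimorphisms is an admissible
epimorphism. -/
def Ex3b (E : ExData C) : Prop :=
  ∀ ⦃X Y Z : C⦄ (f : X ⟶ Y) (g : Y ⟶ Z), E.AdmEpi f → E.AdmEpi g → E.AdmEpi (f ≫ g)

/-- The full set of exact category axioms Ex0–Ex3. -/
structure IsExact [HasZeroObject C] (E : ExData C) : Prop where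
  ex0 : E.Ex0
  ex1 : E.Ex1
  ex2a : E.Ex2a
  ex2b : E.Ex2b
  ex3a : E.Ex3a
  ex3b : E.Ex3b

end ExData

variable {C : Type u} [Category.{v} C] [Preadditive C] [HasZeroObject C]

/-- If `X' → X → X''` and `Y' → Y → X''` are admissible triples in an exact category
(axioms Ex0–Ex2), `t : X' ⟶ Y'` and `u : X ⟶ Y` make the evident squares commute, and
`X → X''` is the cokernel of `X' → X`, then `Y` is the pushout of `X' → Y'` and `X' → X`. -/
theorem stmt_2 (E : ExData C) (h0 : E.Ex0) (h1 : E.Ex1) (h2a : E.Ex2a) (h2b : E.Ex2b)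
    {X' X X'' Y' Y : C} (f : X' ⟶ X) (g : X ⟶ X'') (i : Y' ⟶ Y) (g' : Y ⟶ X'')
    (hfg : E.adm f g) (hig' : E.adm i g')
    (t : X' ⟶ Y') (u : X ⟶ Y) (hsq : t ≫ i = f ≫ u) (htr : u ≫ g' = g)
    (hcoker : ∀ ⦃T : C⦄ (h : X ⟶ T), f ≫ h = 0 → ∃! k : X'' ⟶ T, g ≫ k = h) :
    ∀ ⦃T : C⦄ (a : Y' ⟶ T) (b : X ⟶ T), t ≫ a = f ≫ b →
      ∃! h : Y ⟶ T, i ≫ h = a ∧ u ≫ h = b := by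
  -- basic consequences of Ex1
  have hfg0 : f ≫ g = 0 := (h1 f g hfg).1
  have hig0 : i ≫ g' = 0 := (h1 i g' hig').1
  have icoker := (h1 i g' hig').2.2
  -- g is an epimorphism (from the cokernel property)
  have gepi : ∀ {S : C} (x y : X'' ⟶ S), g ≫ x = g ≫ y → x = y := by
    intro S x y hxy
    have h0' : f ≫ (g ≫ x) = 0 := by rw [← Category.assoc, hfg0, zero_comp]
    obtain ⟨k, hk, huniq⟩ := hcoker (g ≫ x) h0'
    exact (huniq x rfl).trans (huniq y hxy.symm).symm
  intro T a b hab
  -- push out the triple (i, g') along a : Y' ⟶ T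
  obtain ⟨Z, j, w, q, hjq, hcomm, hq⟩ := h2a i g' hig' a
  have hjq0 : j ≫ q = 0 := (h1 j q hjq).1
  have jker := (h1 j q hjq).2.1
  -- j is a monomorphism
  have jmono : ∀ {S : C} (x y : S ⟶ T), x ≫ j = y ≫ j → x = y := by
    intro S x y hxy
    have hx0 : (x ≫ j) ≫ q = 0 := by rw [Category.assoc, hjq0, comp_zero]
    obtain ⟨k, hk, huniq⟩ := jker (x ≫ j) hx0
    exact (huniq x rfl).trans (huniq y hxy.symm).symm
  -- the defect b ≫ j - u ≫ w is killed by f, hence factors through g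
  have hb' : f ≫ (b ≫ j - u ≫ w) = 0 := by
    rw [Preadditive.comp_sub, ← Category.assoc, ← Category.assoc, ← hab, ← hsq,
      Category.assoc, Category.assoc, hcomm, sub_self]
  obtain ⟨k, hk, -⟩ := hcoker (b ≫ j - u ≫ w) hb'
  -- compute k ≫ q = -𝟙
  have hkq : k ≫ q = -𝟙 X'' := by
    apply gepi
    rw [← Category.assoc, hk, Preadditive.sub_comp, Category.assoc, hjq0, comp_zero,
      Category.assoc, hq, htr, zero_sub, Preadditive.comp_neg, Category.comp_id]
  -- the corrected map w + g' ≫ k is killed by q, hence factors through j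
  have hw'q : (w + g' ≫ k) ≫ q = 0 := by
    rw [Preadditive.add_comp, hq, Category.assoc, hkq, Preadditive.comp_neg,
      Category.comp_id, add_neg_cancel]
  obtain ⟨h, hh, -⟩ := jker (w + g' ≫ k) hw'q
  refine ⟨h, ⟨?_, ?_⟩, ?_⟩
  · apply jmono
    rw [Category.assoc, hh, Preadditive.comp_add, ← Category.assoc i g' k, hig0,
      zero_comp, add_zero, hcomm]
  · apply jmono
    rw [Category.assoc, hh, Preadditive.comp_add, ← Category.assoc u g' k, htr, hk,
      add_sub_cancel]
  · rintro h₂ ⟨ha2, hb2⟩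
    have hd0 : i ≫ (h₂ - h) = 0 := by
      have hia : i ≫ h = a := by
        apply jmono
        rw [Category.assoc, hh, Preadditive.comp_add, ← Category.assoc i g' k, hig0,
          zero_comp, add_zero, hcomm]
      rw [Preadditive.comp_sub, ha2, hia, sub_self]
    obtain ⟨k', hk', -⟩ := icoker (h₂ - h) hd0
    have hub : u ≫ h = b := by
      apply jmono
      rw [Category.assoc, hh, Preadditive.comp_add, ← Category.assoc u g' k, htr, hk,
        add_sub_cancel]
    have hgk' : g ≫ k' = g ≫ 0 := by
      rw [comp_zero, ← htr, Category.assoc, hk', Preadditive.comp_sub, hb2, hub, sub_self]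
    have : k' = 0 := gepi _ _ hgk'
    rw [this, comp_zero] at hk'
    exact sub_eq_zero.mp hk'.symm
end

section
/- In an exact category, the pushout axiom Ex2(a) (for any admissible triple X' → X → X'' and morphism X' → Y' there is an admissible triple Y' → Y → X'' with a map X → Y making the diagram commute) is equivalent, modulo axioms Ex0–Ex1, to the statement: for any admissible monomorphism X' → X and any morphism X' → Y', the pushout Y = Y' ⊔_{X'} X exists and the induced morphism Y' → Y is an admissible monomorphism. -/
open CategoryTheory CategoryTheory.Limits ZeroObject

universe v u

variable {C : Type u} [Category.{v} C] [Preadditive C] [HasZeroObject C]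

/-- Modulo the axioms Ex0–Ex1, the pushout axiom Ex2(a) is equivalent to: for any
admissible monomorphism `X' → X` and any morphism `X' → Y'`, the pushout
`Y = Y' ⊔_{X'} X` exists and the induced morphism `Y' → Y` is an admissible
monomorphism. -/
theorem stmt_3 (E : ExData C) (h0 : E.Ex0) (h1 : E.Ex1) :
    E.Ex2a ↔
      ∀ ⦃X' X Y' : C⦄ (f : X' ⟶ X), E.AdmMono f → ∀ (t : X' ⟶ Y'),
        ∃ (Y : C) (i : Y' ⟶ Y) (u : X ⟶ Y),
          t ≫ i = f ≫ u ∧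
          (∀ ⦃T : C⦄ (a : Y' ⟶ T) (b : X ⟶ T), t ≫ a = f ≫ b →
            ∃! h : Y ⟶ T, i ≫ h = a ∧ u ≫ h = b) ∧
          E.AdmMono i := by
  constructor
  · -- Ex2a → pushout statement
    intro h2 X' X Y' f hf t
    obtain ⟨X'', g, hfg⟩ := hf
    obtain ⟨Y, i, u, g', hig, hcomm, hug⟩ := h2 f g hfg t
    obtain ⟨hfg0, hfker, hfcok⟩ := h1 f g hfg
    obtain ⟨hig0, hiker, hicok⟩ := h1 i g' hig
    have gepi : ∀ ⦃T : C⦄ (k₁ k₂ : X'' ⟶ T), g ≫ k₁ = g ≫ k₂ → k₁ = k₂ := by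
      intro T k₁ k₂ hk
      obtain ⟨k0, -, hk0u⟩ := hfcok (g ≫ k₁)
        (by rw [← Category.assoc, hfg0, zero_comp])
      rw [hk0u k₁ rfl, hk0u k₂ hk.symm]
    refine ⟨Y, i, u, hcomm, ?_, ⟨X'', g', hig⟩⟩
    intro T a b hab
    obtain ⟨Z, j, v, g'', hjg, hcomm2, hvg⟩ := h2 i g' hig a
    obtain ⟨hjg0, hjker, hjcok⟩ := h1 j g'' hjg
    have jmono : ∀ ⦃S : C⦄ (k₁ k₂ : S ⟶ T), k₁ ≫ j = k₂ ≫ j → k₁ = k₂ := by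
      intro S k₁ k₂ hk
      obtain ⟨m, -, hmu⟩ := hjker (k₁ ≫ j)
        (by rw [Category.assoc, hjg0, comp_zero])
      rw [hmu k₁ rfl, hmu k₂ hk.symm]
    have e1 : f ≫ (u ≫ v) = f ≫ (b ≫ j) := by
      calc f ≫ (u ≫ v) = (f ≫ u) ≫ v := by rw [Category.assoc]
        _ = (t ≫ i) ≫ v := by rw [hcomm]
        _ = t ≫ (i ≫ v) := by rw [Category.assoc]
        _ = t ≫ (a ≫ j) := by rw [hcomm2]
        _ = (t ≫ a) ≫ j := by rw [Category.assoc]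
        _ = (f ≫ b) ≫ j := by rw [hab]
        _ = f ≫ (b ≫ j) := by rw [Category.assoc]
    have key : f ≫ (u ≫ v - b ≫ j) = 0 := by
      rw [Preadditive.comp_sub, e1, sub_self]
    obtain ⟨w, hw, -⟩ := hfcok _ key
    have hwg : w ≫ g'' = 𝟙 X'' := by
      apply gepi
      rw [← Category.assoc, hw, Preadditive.sub_comp, Category.assoc, hvg,
        Category.assoc, hjg0, comp_zero, sub_zero, hug, Category.comp_id]
    have hv'g : (v - g' ≫ w) ≫ g'' = 0 := by
      rw [Preadditive.sub_comp, hvg, Category.assoc, hwg, Category.comp_id, sub_self]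
    obtain ⟨h, hh, -⟩ := hjker _ hv'g
    have hih : i ≫ h = a := by
      apply jmono
      rw [Category.assoc, hh, Preadditive.comp_sub, ← Category.assoc i g' w,
        hig0, zero_comp, sub_zero]
      exact hcomm2.symm
    have huh : u ≫ h = b := by
      apply jmono
      rw [Category.assoc, hh, Preadditive.comp_sub, ← Category.assoc u g' w,
        hug, hw]
      abel
    refine ⟨h, ⟨hih, huh⟩, ?_⟩
    rintro y ⟨hy1, hy2⟩
    have hd : i ≫ (y - h) = 0 := by
      rw [Preadditive.comp_sub, hy1, hih, sub_self]
    obtain ⟨k, hk, -⟩ := hicok _ hd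
    have hgk : g ≫ k = g ≫ 0 := by
      rw [comp_zero, ← hug, Category.assoc, hk, Preadditive.comp_sub, hy2, huh,
        sub_self]
    have hyh : y - h = 0 := by rw [← hk, gepi _ _ hgk, comp_zero]
    exact sub_eq_zero.mp hyh
  · -- pushout statement → Ex2a
    intro hP X' X X'' Y' f g hfg t
    obtain ⟨Y, i, u, hcomm, hUP, hi⟩ := hP f ⟨X'', g, hfg⟩ t
    obtain ⟨Z, g₀, hig₀⟩ := hi
    obtain ⟨hfg0, hfker, hfcok⟩ := h1 f g hfg
    obtain ⟨hig0, hiker, hicok⟩ := h1 i g₀ hig₀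
    have gepi : ∀ ⦃T : C⦄ (k₁ k₂ : X'' ⟶ T), g ≫ k₁ = g ≫ k₂ → k₁ = k₂ := by
      intro T k₁ k₂ hk
      obtain ⟨k0, -, hk0u⟩ := hfcok (g ≫ k₁)
        (by rw [← Category.assoc, hfg0, zero_comp])
      rw [hk0u k₁ rfl, hk0u k₂ hk.symm]
    obtain ⟨g', ⟨hig', hug'⟩, -⟩ := hUP (0 : Y' ⟶ X'') g
      (by rw [comp_zero, hfg0])
    -- g' is a cokernel of i
    have g'cok : ∀ ⦃S : C⦄ (m : Y ⟶ S), i ≫ m = 0 → ∃! k : X'' ⟶ S, g' ≫ k = m := by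
      intro S m him
      have hfm : f ≫ (u ≫ m) = 0 := by
        rw [← Category.assoc, ← hcomm, Category.assoc, him, comp_zero]
      obtain ⟨k, hk, -⟩ := hfcok _ hfm
      refine ⟨k, ?_, ?_⟩
      · refine (hUP (0 : Y' ⟶ S) (u ≫ m) (by rw [comp_zero, hfm])).unique
          ⟨?_, ?_⟩ ⟨him, rfl⟩
        · rw [← Category.assoc, hig', zero_comp]
        · rw [← Category.assoc, hug', hk]
      · intro k' hk'
        apply gepi
        rw [hk, ← hug', Category.assoc, hk']
    -- comparison isomorphism between Z and X''
    obtain ⟨p, hp, -⟩ := hicok g' hig'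
    obtain ⟨q, hq, -⟩ := g'cok g₀ hig0
    have hpq : p ≫ q = 𝟙 Z := by
      obtain ⟨r, -, hru⟩ := hicok g₀ hig0
      rw [hru (p ≫ q) (by show g₀ ≫ (p ≫ q) = g₀; rw [← Category.assoc, hp, hq]),
        hru (𝟙 Z) (Category.comp_id _)]
    have hqp : q ≫ p = 𝟙 X'' := by
      apply gepi
      rw [← hug', Category.assoc, Category.assoc, ← Category.assoc g' q p, hq,
        hp, Category.comp_id]
    refine ⟨Y, i, u, g', ?_, hcomm, hug'⟩
    exact h0.2 i g₀ i g' (Iso.refl Y') (Iso.refl Y) ⟨p, q, hpq, hqp⟩ hig₀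
      (by simp) (by simpa using hp)
end

section
/- An exact category E is idempotent complete (every idempotent splits) if and only if every acyclic complex over E is exact, where a complex is acyclic if it is homotopy equivalent to an exact complex. -/
open CategoryTheory CategoryTheory.Limits ZeroObject

universe v u

variable {C : Type u} [Category.{v} C] [Preadditive C] [HasZeroObject C]

/-- A complex over an exact category is exact if its differentials factor as
admissible epimorphisms followed by admissible monomorphisms through a sequence of
admissible triples `Z^i → X^i → Z^{i+1}`. -/
def IsExactCpx (E : ExData C) (K : CochainComplex C ℤ) : Prop :=
  ∃ (Z : ℤ → C) (p : ∀ i : ℤ, K.X i ⟶ Z (i + 1)) (j : ∀ i : ℤ, Z i ⟶ K.X i),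
    (∀ i : ℤ, E.adm (j i) (p i)) ∧ ∀ i : ℤ, K.d i (i + 1) = p i ≫ j (i + 1)

/-- A complex is acyclic if it is homotopy equivalent to an exact complex. -/
def IsAcyclicCpx (E : ExData C) (K : CochainComplex C ℤ) : Prop :=
  ∃ L : CochainComplex C ℤ, IsExactCpx E L ∧ Nonempty (HomotopyEquiv K L)

/-- Bounded above complexes: `K.X i = 0` for `i ≫ 0`. -/
def CpxBddAbove (K : CochainComplex C ℤ) : Prop :=
  ∃ n : ℤ, ∀ i : ℤ, n ≤ i → IsZero (K.X i)

/-- Bounded below complexes: `K.X i = 0` for `i ≪ 0`. -/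
def CpxBddBelow (K : CochainComplex C ℤ) : Prop :=
  ∃ n : ℤ, ∀ i : ℤ, i ≤ n → IsZero (K.X i)

/-! If idempotents split, an acyclic complex `K`, homotopy equivalent to an exact `L`, is a
retract of the exact complex `L ⊕ ⨁ₙ disc(Kⁿ)`. The retraction idempotent restricts to the
objects `Zⁿ` through which the differentials factor, and splitting it exhibits each triple of `K`
as a retract of an admissible triple, hence as a direct summand of one; a direct summand of an
admissible triple is admissible by a pushout argument.
Conversely, an idempotent `e` on `A` gives the contractible complex with differentials
alternately `e` and `1 - e`. It is acyclic, so if it is exact then `e = p ≫ j` with `p` an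
admissible epimorphism, and `e ≫ p = p` forces `j ≫ p = 𝟙`. -/

namespace CategoryTheory

variable {C : Type u} [Category.{v} C] [Preadditive C]

structure IsKer {X Y Z : C} (f : X ⟶ Y) (g : Y ⟶ Z) : Prop where
  comp_eq_zero : f ≫ g = 0
  existsUnique_lift : ∀ ⦃T : C⦄ (h : T ⟶ Y), h ≫ g = 0 → ∃! k : T ⟶ X, k ≫ f = h

structure IsCoker {X Y Z : C} (f : X ⟶ Y) (g : Y ⟶ Z) : Prop where
  comp_eq_zero : f ≫ g = 0
  existsUnique_desc : ∀ ⦃T : C⦄ (h : Y ⟶ T), f ≫ h = 0 → ∃! k : Z ⟶ T, g ≫ k = h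

namespace IsKer

variable {X Y Z : C} {f : X ⟶ Y} {g : Y ⟶ Z}

theorem mono (hk : IsKer f g) : Mono f :=
  ⟨fun x y hxy => ((hk.existsUnique_lift (x ≫ f)
    (by rw [Category.assoc, hk.comp_eq_zero, comp_zero])).unique rfl hxy.symm)⟩

theorem exists_iso {X' : C} {f' : X' ⟶ Y} (hk : IsKer f g) (hk' : IsKer f' g) :
    ∃ e : X ≅ X', e.hom ≫ f' = f := by
  obtain ⟨a, ha, -⟩ := hk.existsUnique_lift f' hk'.comp_eq_zero
  obtain ⟨b, hb, -⟩ := hk'.existsUnique_lift f hk.comp_eq_zero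
  have := hk.mono
  have := hk'.mono
  exact ⟨⟨b, a, by simp [← cancel_mono f, ha, hb], by simp [← cancel_mono f', ha, hb]⟩, hb⟩

theorem exists_retraction {s : Z ⟶ Y} (hk : IsKer f g) (hs : s ≫ g = 𝟙 Z) :
    ∃ r : Y ⟶ X, f ≫ r = 𝟙 X ∧ r ≫ f = 𝟙 Y - g ≫ s := by
  obtain ⟨r, hr, -⟩ := hk.existsUnique_lift (𝟙 Y - g ≫ s) (by simp [hs])
  have := hk.mono
  refine ⟨r, ?_, hr⟩
  rw [← cancel_mono f, Category.assoc, hr]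
  simp [reassoc_of% hk.comp_eq_zero]

end IsKer

theorem IsCoker.epi {X Y Z : C} {f : X ⟶ Y} {g : Y ⟶ Z} (hc : IsCoker f g) : Epi g :=
  ⟨fun x y hxy => ((hc.existsUnique_desc (g ≫ x)
    (by rw [← Category.assoc, hc.comp_eq_zero, zero_comp])).unique rfl hxy.symm)⟩

theorem IsCoker.exists_iso {X Y Z Z' : C} {f : X ⟶ Y} {g : Y ⟶ Z} {g' : Y ⟶ Z'}
    (hc : IsCoker f g) (hc' : IsCoker f g') : ∃ e : Z ≅ Z', g ≫ e.hom = g' := by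
  obtain ⟨a, ha, -⟩ := hc.existsUnique_desc g' hc'.comp_eq_zero
  obtain ⟨b, hb, -⟩ := hc'.existsUnique_desc g hc.comp_eq_zero
  have := hc.epi
  have := hc'.epi
  exact ⟨⟨a, b, by simp [← cancel_epi g, reassoc_of% ha, hb],
    by simp [← cancel_epi g', reassoc_of% hb, ha]⟩, ha⟩

theorem IsCoker.hom_ext {X Y Z W T : C} {i : X ⟶ Y} {q : Y ⟶ Z} (hc : IsCoker i q) {u : W ⟶ Y}
    [Epi (u ≫ q)] {d₁ d₂ : Y ⟶ T} (hu : u ≫ d₁ = u ≫ d₂) (hi : i ≫ d₁ = i ≫ d₂) :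
    d₁ = d₂ := by
  rw [← sub_eq_zero]
  obtain ⟨d, hd, -⟩ := hc.existsUnique_desc (d₁ - d₂) (by simp [hi])
  have hd0 : d = 0 := by
    rw [← cancel_epi (u ≫ q), Category.assoc, hd]
    simp [hu]
  rw [← hd, hd0, comp_zero]

section Biprod

variable [HasBinaryBiproducts C]
variable {A B D A' B' D' : C} {f : A ⟶ B} {g : B ⟶ D} {f' : A' ⟶ B'} {g' : B' ⟶ D'}

theorem IsKer.biprod_map_id (hk : IsKer f g) (W : C) :
    IsKer (biprod.map f (𝟙 W)) (biprod.fst ≫ g) := by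
  refine ⟨by simp [hk.comp_eq_zero], fun T h hh => ?_⟩
  obtain ⟨k, hk₁, hk₂⟩ := hk.existsUnique_lift (h ≫ biprod.fst) (by simpa using hh)
  refine ⟨biprod.lift k (h ≫ biprod.snd), by ext <;> simp [hk₁], fun y (hy : _ = h) => ?_⟩
  ext
  · simpa using hk₂ _ (by simp [← hy])
  · simp [← hy]

theorem IsKer.id_biprod_map (hk : IsKer f g) (W : C) :
    IsKer (biprod.map (𝟙 W) f) (biprod.snd ≫ g) := by
  refine ⟨by simp [hk.comp_eq_zero], fun T h hh => ?_⟩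
  obtain ⟨k, hk₁, hk₂⟩ := hk.existsUnique_lift (h ≫ biprod.snd) (by simpa using hh)
  refine ⟨biprod.lift (h ≫ biprod.fst) k, by ext <;> simp [hk₁], fun y (hy : _ = h) => ?_⟩
  ext
  · simp [← hy]
  · simpa using hk₂ _ (by simp [← hy])

theorem IsCoker.biprod_map (hc : IsCoker f g) (hc' : IsCoker f' g') :
    IsCoker (biprod.map f f') (biprod.map g g') := by
  refine ⟨by ext <;> simp [hc.comp_eq_zero, hc'.comp_eq_zero], fun T h hh => ?_⟩
  obtain ⟨k, hk₁, hk₂⟩ := hc.existsUnique_desc (biprod.inl ≫ h)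
    (by simpa using biprod.inl ≫= hh)
  obtain ⟨k', hk₁', hk₂'⟩ := hc'.existsUnique_desc (biprod.inr ≫ h)
    (by simpa using biprod.inr ≫= hh)
  refine ⟨biprod.desc k k', by ext <;> simp [hk₁, hk₁'], fun y (hy : _ = h) => ?_⟩
  ext
  · simpa using hk₂ _ (by simp [← hy])
  · simpa using hk₂' _ (by simp [← hy])

theorem IsKer.of_biprod_map (hk : IsKer (biprod.map f f') (biprod.map g g')) : IsKer f g := by
  have : Mono f := by
    have := hk.mono
    exact mono_of_mono_fac (biprod.inl_map f f').symm
  refine ⟨by simpa using biprod.inl ≫= hk.comp_eq_zero =≫ biprod.fst, fun T h hh => ?_⟩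
  obtain ⟨k, hk₁, -⟩ := hk.existsUnique_lift (h ≫ biprod.inl) (by ext <;> simp [hh])
  have hk₁' : (k ≫ biprod.fst) ≫ f = h := by simpa using hk₁ =≫ biprod.fst
  exact ⟨k ≫ biprod.fst, hk₁', fun y hy => by rw [← cancel_mono f, hy, hk₁']⟩

theorem biprod.eq_map_of_inl_comp_of_comp_fst (φ : A ⊞ A' ⟶ B ⊞ B')
    (h₁ : biprod.inl ≫ φ = f ≫ biprod.inl) (h₂ : φ ≫ biprod.fst = biprod.fst ≫ f) :
    φ = biprod.map f (biprod.inr ≫ φ ≫ biprod.snd) := by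
  ext
  · simp [reassoc_of% h₁]
  · simp [reassoc_of% h₁]
  · simp [h₂]
  · simp

theorem Retract.exists_iso_biprod [IsIdempotentComplete C] {X' X : C} (R : Retract X' X) :
    ∃ (X'' : C) (e : X ≅ X' ⊞ X''), biprod.inl ≫ e.inv = R.i ∧ e.hom ≫ biprod.fst = R.r := by
  obtain ⟨X'', i, r, hir, hri⟩ := IsIdempotentComplete.idempotents_split X (𝟙 X - R.r ≫ R.i)
    (by simp [Preadditive.sub_comp, Preadditive.comp_sub])
  have : Mono i := mono_of_mono_fac hir
  have hRi : R.i ≫ r = 0 := by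
    rw [← cancel_mono i, Category.assoc, hri]
    simp
  have hiR : i ≫ R.r = 0 := by
    rw [← Category.id_comp i, ← hir, Category.assoc, Category.assoc, reassoc_of% hri]
    simp
  let b : BinaryBicone X' X'' := ⟨X, R.r, r, R.i, i, R.retract, hRi, hiR, hir⟩
  have htotal : b.fst ≫ b.inl + b.snd ≫ b.inr = 𝟙 X := by simp [b, hri]
  exact ⟨X'', biprod.uniqueUpToIso X' X'' (isBinaryBilimitOfTotal b htotal), by simp [b],
    by simp [b]⟩

end Biprod

end CategoryTheory

section Constructions

variable {C : Type u} [Category.{v} C] [Preadditive C]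

abbrev idempotentCpx {A : C} (e : A ⟶ A) (he : e ≫ e = e) : CochainComplex C ℤ :=
  CochainComplex.of (fun _ => A) (fun n => if Even n then e else 𝟙 A - e) fun n => by
    by_cases hn : Even n <;> simp [hn, ← Int.not_even_iff_odd, he]

theorem idempotentCpx_d {A : C} (e : A ⟶ A) (he : e ≫ e = e) (n : ℤ) :
    (idempotentCpx e he).d n (n + 1) = if Even n then e else 𝟙 A - e :=
  CochainComplex.of_d (fun _ => A) (fun n => if Even n then e else 𝟙 A - e) n

def idempotentCpx.contraction {A : C} (e : A ⟶ A) (he : e ≫ e = e) :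
    Homotopy (𝟙 (idempotentCpx e he)) 0 where
  hom i j := if j + 1 = i then 𝟙 A else 0
  zero i j h := if_neg h
  comm i := by
    obtain ⟨k, rfl⟩ : ∃ k, i = k + 1 := ⟨i - 1, by ring⟩
    rw [dNext_eq _ (show (ComplexShape.up ℤ).Rel (k + 1) (k + 1 + 1) from rfl),
      prevD_eq _ (show (ComplexShape.up ℤ).Rel k (k + 1) from rfl)]
    by_cases hk : Even k <;> simp [hk, ← Int.not_even_iff_odd]

section Biprod

variable [HasBinaryBiproducts C]

/-- `L` plus, for every `n`, the disc `K^n = K^n` placed in degrees `n - 1` and `n`. -/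
noncomputable abbrev addDiscs (L K : CochainComplex C ℤ) : CochainComplex C ℤ :=
  CochainComplex.of (fun n => L.X n ⊞ (K.X (n + 1) ⊞ K.X n))
    (fun n => biprod.map (L.d n (n + 1)) (biprod.fst ≫ biprod.inr)) fun n => by ext <;> simp

/-- `i ≫ r = 𝟙` is the homotopy `f ≫ g - 𝟙 = d h + h d`. -/
noncomputable def HomotopyEquiv.retractAddDiscs {K L : CochainComplex C ℤ}
    (φ : HomotopyEquiv K L) : Retract K (addDiscs L K) where
  i := CochainComplex.ofHom
    (fun n => biprod.lift (φ.hom.f n) (biprod.lift (K.d n (n + 1)) (𝟙 _))) fun n => by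
      ext <;> simp
  r := CochainComplex.ofHom
    (fun n => biprod.desc (φ.inv.f n)
      (biprod.desc (-φ.homotopyHomInvId.hom (n + 1) n) (-prevD n φ.homotopyHomInvId.hom)))
    fun n => by
      have hK := prevD_eq φ.homotopyHomInvId.hom (show (ComplexShape.up ℤ).Rel n (n + 1) from rfl)
      have hK' := prevD_eq φ.homotopyHomInvId.hom
        (show (ComplexShape.up ℤ).Rel (n - 1) n from sub_add_cancel n 1)
      ext
      · simp [φ.inv.comm]
      · simp [hK]
      · simp [hK']
  retract := by
    ext n
    have h := φ.homotopyHomInvId.comm n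
    rw [dNext_eq _ (show (ComplexShape.up ℤ).Rel n (n + 1) from rfl), HomologicalComplex.comp_f,
      HomologicalComplex.id_f] at h
    simp only [HomologicalComplex.comp_f, HomologicalComplex.id_f, biprod.lift_desc, h,
      Preadditive.comp_neg, Category.id_comp]
    abel

end Biprod

end Constructions

namespace ExData.IsExact

variable {E : ExData C} (hE : E.IsExact)
include hE

section

variable {X Y Z : C} {f : X ⟶ Y} {g : Y ⟶ Z}

theorem isKer (h : E.adm f g) : IsKer f g := ⟨(hE.ex1 f g h).1, (hE.ex1 f g h).2.1⟩

theorem isCoker (h : E.adm f g) : IsCoker f g := ⟨(hE.ex1 f g h).1, (hE.ex1 f g h).2.2⟩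

theorem adm_of_isKer {M : C} {m : M ⟶ Y} (hm : E.adm m g) (hk : IsKer f g) : E.adm f g := by
  obtain ⟨e, he⟩ := (hE.isKer hm).exists_iso hk
  exact hE.ex0.2 m g f g e (Iso.refl _) (Iso.refl _) hm (by simp [he]) (by simp)

theorem adm_of_isCoker {W : C} {q : Y ⟶ W} (hq : E.adm f q) (hc : IsCoker f g) : E.adm f g := by
  obtain ⟨e, he⟩ := (hE.isCoker hq).exists_iso hc
  exact hE.ex0.2 f q f g (Iso.refl _) (Iso.refl _) e hq (by simp) (by simp [he])

end

theorem adm_zero_id (X : C) : E.adm (0 : 0 ⟶ X) (𝟙 X) := by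
  obtain ⟨Y, f, -, g, hfg, -, -⟩ := hE.ex2b (𝟙 (0 : C)) (𝟙 0) hE.ex0.1 (0 : X ⟶ 0)
  have hf : f = 0 := (isZero_zero C).eq_of_src _ _
  subst hf
  have hid : IsCoker (0 : 0 ⟶ Y) (𝟙 Y) :=
    ⟨by simp, fun T h _ => ⟨h, by simp, fun y hy => by simpa using hy⟩⟩
  obtain ⟨e, he⟩ := hid.exists_iso (hE.isCoker hfg)
  exact hE.ex0.2 0 g 0 (𝟙 X) (Iso.refl _) e (Iso.refl _) hfg (by simp) (by simp [← he])

theorem exists_binaryBicone (X Y : C) :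
    ∃ b : BinaryBicone X Y, b.fst ≫ b.inl + b.snd ≫ b.inr = 𝟙 b.pt ∧ E.adm b.inr b.fst := by
  obtain ⟨P, i, u, g, hig, -, hug⟩ := hE.ex2a _ _ (hE.adm_zero_id X) (0 : 0 ⟶ Y)
  have hk := hE.isKer hig
  obtain ⟨π, hiπ, hπi⟩ := hk.exists_retraction hug
  have := hk.mono
  have huπ : u ≫ π = 0 := by
    rw [← cancel_mono i, Category.assoc, hπi]
    simp [reassoc_of% hug]
  exact ⟨⟨P, g, π, u, i, hug, huπ, hk.comp_eq_zero, hiπ⟩, by simp [hπi], hig⟩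

theorem hasBinaryBiproducts : HasBinaryBiproducts C := ⟨fun X Y => by
  obtain ⟨b, htotal, -⟩ := hE.exists_binaryBicone X Y
  exact hasBinaryBiproduct_of_total b htotal⟩

/-- The square produced by axiom Ex2(a) has the existence half of the pushout property. -/
theorem exists_desc_of_ex2a {X' X X'' Y' Y T : C} {f : X' ⟶ X} {g : X ⟶ X''} {t : X' ⟶ Y'}
    {i : Y' ⟶ Y} {u : X ⟶ Y} {g₂ : Y ⟶ X''} (hfg : E.adm f g) (hig₂ : E.adm i g₂)
    (h₁ : t ≫ i = f ≫ u) (h₂ : u ≫ g₂ = g) (v : X ⟶ T) (w : Y' ⟶ T) (hvw : f ≫ v = t ≫ w) :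
    ∃ z : Y ⟶ T, u ≫ z = v ∧ i ≫ z = w := by
  obtain ⟨R, n, ub, gh, hn, hwn, hgh⟩ := hE.ex2a i g₂ hig₂ w
  obtain ⟨δ, hδ, -⟩ := (hE.isCoker hfg).existsUnique_desc (u ≫ ub - v ≫ n)
    (by rw [Preadditive.comp_sub, ← reassoc_of% h₁, ← hwn, reassoc_of% hvw, sub_self])
  have := (hE.isCoker hfg).epi
  have hδgh : δ ≫ gh = 𝟙 X'' := by
    rw [← cancel_epi g, reassoc_of% hδ, Preadditive.sub_comp, Category.assoc, hgh, h₂,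
      Category.assoc, (hE.isKer hn).comp_eq_zero]
    simp
  obtain ⟨r, hnr, -⟩ := (hE.isKer hn).exists_retraction hδgh
  refine ⟨(ub - g₂ ≫ δ) ≫ r, ?_, ?_⟩
  · rw [Preadditive.comp_sub_assoc, reassoc_of% h₂, hδ, sub_sub_cancel, Category.assoc, hnr,
      Category.comp_id]
  · rw [Preadditive.comp_sub_assoc, reassoc_of% (hE.isKer hig₂).comp_eq_zero, ← hwn]
    simp [hnr]

theorem exists_comm_of_isExactCpx {N N' : CochainComplex C ℤ} (φ : N ⟶ N')
    {Z Z' : ℤ → C} {p : ∀ i, N.X i ⟶ Z (i + 1)} {j : ∀ i, Z i ⟶ N.X i}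
    {p' : ∀ i, N'.X i ⟶ Z' (i + 1)} {j' : ∀ i, Z' i ⟶ N'.X i}
    (hadm : ∀ i, E.adm (j i) (p i)) (hd : ∀ i, N.d i (i + 1) = p i ≫ j (i + 1))
    (hadm' : ∀ i, E.adm (j' i) (p' i)) (hd' : ∀ i, N'.d i (i + 1) = p' i ≫ j' (i + 1)) :
    ∃ ε : ∀ i, Z i ⟶ Z' i, ∀ i, ε i ≫ j' i = j i ≫ φ.f i ∧ p i ≫ ε (i + 1) = φ.f i ≫ p' i := by
  have hj' := fun i => (hE.isKer (hadm' i)).mono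
  have hlift : ∀ i, ∃ ε : Z i ⟶ Z' i, ε ≫ j' i = j i ≫ φ.f i := fun i => by
    obtain ⟨ε, hε, -⟩ := (hE.isKer (hadm' i)).existsUnique_lift (j i ≫ φ.f i) (by
      rw [← cancel_mono (j' (i + 1)), Category.assoc, Category.assoc, ← hd', φ.comm, hd,
        Category.assoc, reassoc_of% (hE.isKer (hadm i)).comp_eq_zero, zero_comp, zero_comp])
    exact ⟨ε, hε⟩
  choose ε hε using hlift
  refine ⟨ε, fun i => ⟨hε i, ?_⟩⟩
  rw [← cancel_mono (j' (i + 1)), Category.assoc, hε, reassoc_of% (hd i).symm, ← φ.comm, hd',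
    Category.assoc]

theorem isExactCpx_zero : IsExactCpx E (HomologicalComplex.zero : CochainComplex C ℤ) :=
  ⟨fun _ => 0, fun _ => 0, fun _ => 0, fun _ => by
    have h := hE.ex0.1
    rwa [id_zero] at h,
    fun _ => zero_comp.symm⟩

theorem isAcyclicCpx_of_homotopy_id_zero {K : CochainComplex C ℤ} (h : Homotopy (𝟙 K) 0) :
    IsAcyclicCpx E K :=
  ⟨HomologicalComplex.zero, hE.isExactCpx_zero,
    ⟨{ hom := 0
       inv := 0
       homotopyHomInvId := (Homotopy.ofEq (by simp)).trans h.symm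
       homotopyInvHomId := Homotopy.ofEq (HomologicalComplex.isZero_zero.eq_of_src _ _) }⟩⟩

section Biprod

variable [HasBinaryBiproducts C]

theorem adm_inr_fst (X Y : C) : E.adm (biprod.inr : Y ⟶ X ⊞ Y) (biprod.fst : X ⊞ Y ⟶ X) := by
  obtain ⟨b, htotal, hb⟩ := hE.exists_binaryBicone X Y
  exact hE.ex0.2 _ _ _ _ (Iso.refl Y)
    (biprod.uniqueUpToIso X Y (isBinaryBilimitOfTotal b htotal)) (Iso.refl X) hb
    (by ext <;> simp) (by simp)

theorem adm_inl_snd (X Y : C) : E.adm (biprod.inl : X ⟶ X ⊞ Y) (biprod.snd : X ⊞ Y ⟶ Y) :=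
  hE.ex0.2 _ _ _ _ (Iso.refl X) (biprod.braiding Y X) (Iso.refl Y) (hE.adm_inr_fst Y X)
    (by ext <;> simp) (by simp)

variable {A B D A' B' D' : C} {f : A ⟶ B} {g : B ⟶ D} {f' : A' ⟶ B'} {g' : B' ⟶ D'}

theorem adm_biprod_map (h : E.adm f g) (h' : E.adm f' g') :
    E.adm (biprod.map f f') (biprod.map g g') := by
  obtain ⟨_, _, hm⟩ := hE.ex3b _ _ ⟨_, _, hE.adm_inr_fst B A'⟩ ⟨_, _, h⟩
  obtain ⟨_, _, hm'⟩ := hE.ex3b _ _ ⟨_, _, hE.adm_inl_snd B B'⟩ ⟨_, _, h'⟩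
  have hmono : E.AdmMono (biprod.map f (𝟙 A') ≫ biprod.map (𝟙 B) f') :=
    hE.ex3a _ _ ⟨_, _, hE.adm_of_isKer hm ((hE.isKer h).biprod_map_id A')⟩
      ⟨_, _, hE.adm_of_isKer hm' ((hE.isKer h').id_biprod_map B)⟩
  rw [show biprod.map f (𝟙 A') ≫ biprod.map (𝟙 B) f' = biprod.map f f' by ext <;> simp] at hmono
  obtain ⟨_, _, hq⟩ := hmono
  exact hE.adm_of_isCoker hq ((hE.isCoker h).biprod_map (hE.isCoker h'))

/-- `f` is recovered as the pushout of `f ⊕ 𝟙` along the projection `A ⊞ B' ⟶ A`. -/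
theorem adm_of_adm_biprod_map (h : E.adm (biprod.map f f') (biprod.map g g')) : E.adm f g := by
  have hk : IsKer f g := (hE.isKer h).of_biprod_map
  obtain ⟨_, _, hm⟩ := hE.ex3b _ _ ⟨_, _, h⟩ ⟨_, _, hE.adm_inr_fst D D'⟩
  rw [biprod.map_fst] at hm
  have hK := hE.adm_of_isKer hm (hk.biprod_map_id B')
  obtain ⟨Y, i, u, g₂, hig₂, h₁, h₂⟩ := hE.ex2a _ _ hK (biprod.fst : A ⊞ B' ⟶ A)
  obtain ⟨z, hz₁, hz₂⟩ := hE.exists_desc_of_ex2a hK hig₂ h₁ h₂ biprod.fst f (by simp)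
  have : Epi (u ≫ g₂) := h₂ ▸ (hE.isCoker hK).epi
  have hc := hE.isCoker hig₂
  have hinr : biprod.inr ≫ u = 0 := by simpa using biprod.inr ≫= h₁.symm
  have hu : biprod.fst ≫ biprod.inl ≫ u = u := by
    have := biprod.total (X := B) (Y := B') =≫ u
    rwa [Preadditive.add_comp, Category.assoc, Category.assoc, hinr, comp_zero, add_zero,
      Category.id_comp] at this
  have hfu : f ≫ biprod.inl ≫ u = i := by simpa using (biprod.inl ≫= h₁).symm
  have hzg : g₂ = z ≫ g := hc.hom_ext (u := u) (by rw [h₂, reassoc_of% hz₁])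
    (by rw [hc.comp_eq_zero, reassoc_of% hz₂, hk.comp_eq_zero])
  have hzu : z ≫ biprod.inl ≫ u = 𝟙 Y :=
    hc.hom_ext (u := u) (by simp [reassoc_of% hz₁, hu]) (by simp [reassoc_of% hz₂, hfu])
  have huz : (biprod.inl ≫ u) ≫ z = 𝟙 B := by simp [hz₁]
  exact hE.ex0.2 i g₂ f g (Iso.refl A) ⟨z, _, hzu, huz⟩ (Iso.refl D) hig₂ (by simp [hz₂])
    (by simp [hzg])

theorem isExactCpx_addDiscs {L : CochainComplex C ℤ} (hL : IsExactCpx E L)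
    (K : CochainComplex C ℤ) :
    IsExactCpx E (addDiscs L K) := by
  obtain ⟨Z, p, j, hadm, hd⟩ := hL
  exact ⟨fun n => Z n ⊞ K.X n, fun n => biprod.map (p n) biprod.fst,
    fun n => biprod.map (j n) biprod.inr,
    fun n => hE.adm_biprod_map (hadm n) (hE.adm_inr_fst _ _),
    fun n => by ext <;> simp [hd]⟩

end Biprod

/-- Splitting the three retractions decomposes `(f, g)` as `(f', g') ⊕ (f'', g'')`. -/
theorem adm_of_retract [IsIdempotentComplete C] {X Y Z X' Y' Z' : C} {f : X ⟶ Y} {g : Y ⟶ Z}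
    {f' : X' ⟶ Y'} {g' : Y' ⟶ Z'} (hfg : E.adm f g)
    (rX : Retract X' X) (rY : Retract Y' Y) (rZ : Retract Z' Z)
    (hfi : f' ≫ rY.i = rX.i ≫ f) (hgi : g' ≫ rZ.i = rY.i ≫ g)
    (hfr : rX.r ≫ f' = f ≫ rY.r) (hgr : rY.r ≫ g' = g ≫ rZ.r) : E.adm f' g' := by
  have := hE.hasBinaryBiproducts
  obtain ⟨_, eX, hXi, hXr⟩ := rX.exists_iso_biprod
  obtain ⟨_, eY, hYi, hYr⟩ := rY.exists_iso_biprod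
  obtain ⟨_, eZ, hZi, hZr⟩ := rZ.exists_iso_biprod
  have hf := biprod.eq_map_of_inl_comp_of_comp_fst (f := f') (eX.inv ≫ f ≫ eY.hom)
    (by rw [reassoc_of% hXi, ← reassoc_of% hfi, ← hYi]; simp)
    (by rw [Category.assoc, Category.assoc, hYr, ← hfr, ← hXr]; simp)
  have hg := biprod.eq_map_of_inl_comp_of_comp_fst (f := g') (eY.inv ≫ g ≫ eZ.hom)
    (by rw [reassoc_of% hYi, ← reassoc_of% hgi, ← hZi]; simp)
    (by rw [Category.assoc, Category.assoc, hZr, ← hgr, ← hYr]; simp)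
  have h := hE.ex0.2 f g (eX.inv ≫ f ≫ eY.hom) (eY.inv ≫ g ≫ eZ.hom) eX eY eZ hfg
    (by simp) (by simp)
  rw [hf, hg] at h
  exact hE.adm_of_adm_biprod_map h

theorem isExactCpx_of_retract [IsIdempotentComplete C] {K N : CochainComplex C ℤ}
    (R : Retract K N) (hN : IsExactCpx E N) : IsExactCpx E K := by
  obtain ⟨Z, p, j, hadm, hd⟩ := hN
  obtain ⟨ε, hε⟩ := hE.exists_comm_of_isExactCpx (R.r ≫ R.i) hadm hd hadm hd
  have hir : ∀ i, R.i.f i ≫ R.r.f i = 𝟙 (K.X i) := fun i => by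
    rw [← HomologicalComplex.comp_f, R.retract, HomologicalComplex.id_f]
  have hεj : ∀ i, ε i ≫ j i = j i ≫ R.r.f i ≫ R.i.f i := fun i => by simpa using (hε i).1
  have hpε : ∀ i, p i ≫ ε (i + 1) = R.r.f i ≫ R.i.f i ≫ p i := fun i => by simpa using (hε i).2
  have hεε : ∀ i, ε i ≫ ε i = ε i := fun i => by
    have := (hE.isKer (hadm i)).mono
    rw [← cancel_mono (j i), Category.assoc, hεj, reassoc_of% hεj, reassoc_of% hir]
  choose W ι ρ hιρ hρι using fun i => IsIdempotentComplete.idempotents_split (Z i) (ε i) (hεε i)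
  have hιε : ∀ i, ι i ≫ ε i = ι i := fun i => by rw [← hρι, reassoc_of% hιρ]
  have hερ : ∀ i, ε i ≫ ρ i = ρ i := fun i => by rw [← hρι, Category.assoc, hιρ, Category.comp_id]
  refine ⟨W, fun i => R.i.f i ≫ p i ≫ ρ (i + 1), fun i => ι i ≫ j i ≫ R.r.f i,
    fun i => hE.adm_of_retract (hadm i) ⟨ι i, ρ i, hιρ i⟩ ⟨R.i.f i, R.r.f i, hir i⟩
      ⟨ι (i + 1), ρ (i + 1), hιρ (i + 1)⟩ ?_ ?_ ?_ ?_, fun i => ?_⟩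
  · rw [Category.assoc, Category.assoc, ← hεj, reassoc_of% hιε]
  · rw [Category.assoc, Category.assoc, hρι, hpε, reassoc_of% hir]
  · rw [reassoc_of% hρι, reassoc_of% hεj, hir, Category.comp_id]
  · rw [← reassoc_of% hpε, hερ]
  · rw [Category.assoc, Category.assoc, reassoc_of% hρι, reassoc_of% hεj, hir, Category.comp_id,
      ← reassoc_of% hd, R.i.comm_assoc, hir, Category.comp_id]

theorem isIdempotentComplete (H : ∀ K : CochainComplex C ℤ, IsAcyclicCpx E K → IsExactCpx E K) :
    IsIdempotentComplete C := by
  refine ⟨fun A e he => ?_⟩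
  obtain ⟨Z, p, j, hadm, hd⟩ :=
    H _ (hE.isAcyclicCpx_of_homotopy_id_zero (idempotentCpx.contraction e he))
  have hpj : p 0 ≫ j 1 = e := by
    have h := hd 0
    rw [idempotentCpx_d] at h
    simpa using h.symm
  have hpj' : p (-1) ≫ j 0 = 𝟙 A - e := by
    have h := hd (-1)
    rw [idempotentCpx_d] at h
    simpa using h.symm
  have hep : e ≫ p 0 = p 0 := by
    have : (𝟙 A - e) ≫ p 0 = 0 := by
      rw [← hpj', Category.assoc, (hE.isKer (hadm 0)).comp_eq_zero, comp_zero]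
    rwa [Preadditive.sub_comp, Category.id_comp, sub_eq_zero, eq_comm] at this
  have := (hE.isCoker (hadm 0)).epi
  exact ⟨Z 1, j 1, p 0, by
    rw [← cancel_epi (p 0), reassoc_of% hpj, hep]
    exact (Category.comp_id _).symm, hpj⟩

theorem isExactCpx_of_isAcyclicCpx [IsIdempotentComplete C] {K : CochainComplex C ℤ}
    (hK : IsAcyclicCpx E K) : IsExactCpx E K := by
  have := hE.hasBinaryBiproducts
  obtain ⟨L, hL, ⟨φ⟩⟩ := hK
  exact hE.isExactCpx_of_retract φ.retractAddDiscs (hE.isExactCpx_addDiscs hL K)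

end ExData.IsExact

/-- An exact category `E` is idempotent complete if and only if every acyclic complex
over `E` is exact. -/
theorem stmt_4 (E : ExData C) (hE : E.IsExact) :
    IsIdempotentComplete C ↔
      ∀ K : CochainComplex C ℤ, IsAcyclicCpx E K → IsExactCpx E K :=
  ⟨fun _ _ => hE.isExactCpx_of_isAcyclicCpx, hE.isIdempotentComplete⟩
end
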